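/- Let (γ_n)_{n≥1} be a real sequence and let ℕ_{≥1} = ⊔_{i≥1} X_i be a partition of the positive integers into sets X_i. Suppose: (i) for each i, the subseries over X_i satisfies the Cauchy criterion, i.e., for every ε > 0 there exists N such that for all N ≤ m_1 ≤ m_2, |Σ_{n ∈ [m_1, m_2] ∩ X_i} γ_n| < ε; and (ii) for each i there exists D_i ≥ 0 such that |Σ_{n ∈ [a, b] ∩ X_i} γ_n| ≤ D_i for every interval of integers [a, b], and Σ_{i=1}^∞ D_i < ∞. Then Σ_{n=1}^∞ γ_n converges. -/

import Mathlib

/-!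
Split each block sum `∑_{n ∈ [a, b]} γ n` along the partition into the series of the block sums
along the `X i`. As `a → ∞` every term tends to `0` (uniformly in `b`) by the Cauchy criterion
along `X i`, and the terms are dominated by the summable `D i`, so by Tannery's theorem the
whole series tends to `0`. That is the Cauchy criterion for `∑ γ n`.
-/

open Filter Topology Finset

section CauchyCriterion

variable {E : Type*} [SeminormedAddCommGroup E]

lemma tendsto_comap_fst_atTop_nhds_zero_iff {u : ℕ × ℕ → E} :
    Tendsto u (atTop.comap Prod.fst) (𝓝 0) ↔
      ∀ ε : ℝ, 0 < ε → ∃ N : ℕ, ∀ m₁ m₂ : ℕ, N ≤ m₁ → ‖u (m₁, m₂)‖ < ε := by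
  simp [(atTop_basis.comap Prod.fst).tendsto_iff Metric.nhds_basis_ball]

lemma tendsto_sum_Icc_of_cauchy {f : ℕ → E}
    (h : ∀ ε : ℝ, 0 < ε → ∃ N : ℕ, ∀ m₁ m₂ : ℕ, N ≤ m₁ → m₁ ≤ m₂ →
      ‖∑ n ∈ Icc m₁ m₂, f n‖ < ε) :
    Tendsto (fun p : ℕ × ℕ => ∑ n ∈ Icc p.1 p.2, f n) (atTop.comap Prod.fst) (𝓝 0) := by
  refine tendsto_comap_fst_atTop_nhds_zero_iff.2 fun ε hε => ?_
  obtain ⟨N, hN⟩ := h ε hε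
  refine ⟨N, fun m₁ m₂ hm₁ => ?_⟩
  rcases le_or_gt m₁ m₂ with hm | hm
  · exact hN m₁ m₂ hm₁ hm
  · simpa [Icc_eq_empty_of_lt hm] using hε

lemma sum_Icc_one_sub_sum_Icc_one (f : ℕ → E) {m n : ℕ} (hmn : m ≤ n) :
    ∑ k ∈ Icc 1 n, f k - ∑ k ∈ Icc 1 m, f k = ∑ k ∈ Icc (m + 1) n, f k := by
  have hIcc_one (k : ℕ) : Icc 1 k = Ioc 0 k := Icc_add_one_left_eq_Ioc 0 k
  rw [hIcc_one, hIcc_one, Icc_add_one_left_eq_Ioc, sub_eq_iff_eq_add',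
    sum_Ioc_consecutive f (Nat.zero_le m) hmn]

lemma cauchySeq_sum_Icc_of_tendsto {f : ℕ → E}
    (h : Tendsto (fun p : ℕ × ℕ => ∑ n ∈ Icc p.1 p.2, f n) (atTop.comap Prod.fst) (𝓝 0)) :
    CauchySeq fun N => ∑ n ∈ Icc 1 N, f n := by
  refine Metric.cauchySeq_iff'.2 fun ε hε => ?_
  obtain ⟨N, hN⟩ := tendsto_comap_fst_atTop_nhds_zero_iff.1 h ε hε
  refine ⟨N, fun n hn => ?_⟩
  rw [dist_eq_norm, sum_Icc_one_sub_sum_Icc_one f hn]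
  exact hN (N + 1) n N.le_succ

end CauchyCriterion

lemma hasSum_sum_indicator {ι α M : Type*} [AddCommMonoid M] [TopologicalSpace M]
    [ContinuousAdd M] {X : ι → Set α} {s : Finset α} (hs : ∀ a ∈ s, ∃! i, a ∈ X i)
    (f : α → M) :
    HasSum (fun i => ∑ a ∈ s, (X i).indicator f a) (∑ a ∈ s, f a) := by
  refine hasSum_sum fun a ha => ?_
  obtain ⟨i, hi, huniq⟩ := hs a ha
  convert hasSum_single i fun j hj => Set.indicator_of_notMem (fun hj' => hj (huniq j hj')) f
  exact (Set.indicator_of_mem hi f).symm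

theorem converges_of_decomposition_general (γ : ℕ → ℝ) (X : ℕ → Set ℕ)
    (hpart : ∀ n : ℕ, 1 ≤ n → ∃! i : ℕ, n ∈ X i)
    (hcauchy : ∀ i : ℕ, ∀ ε : ℝ, 0 < ε → ∃ N : ℕ, ∀ m₁ m₂ : ℕ, N ≤ m₁ → m₁ ≤ m₂ →
      |∑ n ∈ Finset.Icc m₁ m₂, Set.indicator (X i) γ n| < ε)
    (D : ℕ → ℝ)
    (hD : ∀ i : ℕ, ∀ a b : ℕ, |∑ n ∈ Finset.Icc a b, Set.indicator (X i) γ n| ≤ D i)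
    (hDsum : Summable D) :
    ∃ S : ℝ, Tendsto (fun N => ∑ n ∈ Finset.Icc 1 N, γ n) atTop (𝓝 S) := by
  have hblocks : Tendsto (fun p : ℕ × ℕ => ∑' i, ∑ n ∈ Icc p.1 p.2, (X i).indicator γ n)
      (atTop.comap Prod.fst) (𝓝 0) := by
    simpa using tendsto_tsum_of_dominated_convergence hDsum
      (fun i => tendsto_sum_Icc_of_cauchy (by simpa only [Real.norm_eq_abs] using hcauchy i))
      (Eventually.of_forall fun p i => by simpa only [Real.norm_eq_abs] using hD i p.1 p.2)
  have hsplit : ∀ᶠ p : ℕ × ℕ in atTop.comap Prod.fst,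
      ∑' i, ∑ n ∈ Icc p.1 p.2, (X i).indicator γ n = ∑ n ∈ Icc p.1 p.2, γ n := by
    filter_upwards [(eventually_ge_atTop 1).comap Prod.fst] with p hp
    exact (hasSum_sum_indicator (fun n hn => hpart n (hp.trans (mem_Icc.1 hn).1)) γ).tsum_eq
  exact cauchySeq_tendsto_of_complete (cauchySeq_sum_Icc_of_tendsto (hblocks.congr' hsplit))

/-- **Lemma 4.13.** If the positive integers are partitioned into sets `X_i` such that
each subseries of `Σ γ_n` along `X_i` satisfies the Cauchy criterion, and all block
sums along `X_i` are bounded by constants `D_i` with `Σ D_i < ∞`, then `Σ γ_n`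
converges. -/
theorem converges_of_decomposition (γ : ℕ → ℝ) (X : ℕ → Set ℕ)
    (hpart : ∀ n : ℕ, 1 ≤ n → ∃! i : ℕ, n ∈ X i)
    (hcauchy : ∀ i : ℕ, ∀ ε : ℝ, 0 < ε → ∃ N : ℕ, ∀ m₁ m₂ : ℕ, N ≤ m₁ → m₁ ≤ m₂ →
      |∑ n ∈ Finset.Icc m₁ m₂, Set.indicator (X i) γ n| < ε)
    (D : ℕ → ℝ) (hD0 : ∀ i, 0 ≤ D i)
    (hD : ∀ i : ℕ, ∀ a b : ℕ, |∑ n ∈ Finset.Icc a b, Set.indicator (X i) γ n| ≤ D i)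
    (hDsum : Summable D) :
    ∃ S : ℝ, Tendsto (fun N => ∑ n ∈ Finset.Icc 1 N, γ n) atTop (𝓝 S) :=
  converges_of_decomposition_general γ X hpart hcauchy D hD hDsum
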